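/- Let E be a topological graph. The following conditions are equivalent: (i) E is minimal (the only closed invariant subsets of E⁰ are ∅ and E⁰); (ii) for every v ∈ E⁰ and every negative orbit e of v, the orbit space Orb(v, e) is dense in E⁰; (iii) for every non-empty open V ⊆ E⁰, S(H(V)) = E⁰. -/

import Mathlib

open Set Topology

variable {E0 E1 : Type*} [TopologicalSpace E0] [TopologicalSpace E1]

/-- A set is positively invariant if the range of every edge with domain in it lies in it. -/
def PosInv (d r : E1 → E0) (X : Set E0) : Prop := ∀ e : E1, d e ∈ X → r e ∈ X

/-- Sources: `E⁰ \ closure (r (E¹))`. -/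
def Sce (r : E1 → E0) : Set E0 := (closure (Set.range r))ᶜ

/-- Vertices having a neighborhood with compact `r`-preimage. -/
def FinSet (r : E1 → E0) : Set E0 := {v | ∃ V ∈ 𝓝 v, IsCompact (r ⁻¹' V)}

/-- Regular vertices. -/
def Rg (r : E1 → E0) : Set E0 := FinSet r \ closure (Sce r)

/-- Singular vertices. -/
def Sg (r : E1 → E0) : Set E0 := (Rg r)ᶜ

/-- A set is negatively invariant if every regular vertex in it receives an edge from it. -/
def NegInv (d r : E1 → E0) (X : Set E0) : Prop :=
  ∀ v ∈ X ∩ Rg r, ∃ e : E1, r e = v ∧ d e ∈ X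

/-- Invariant = positively and negatively invariant. -/
def Invariant (d r : E1 → E0) (X : Set E0) : Prop := PosInv d r X ∧ NegInv d r X

/-- The chain condition for a finite path `(e 0, e 1, …, e n)` of edges:
`d (e k) = r (e (k+1))`. -/
def IsPath (d r : E1 → E0) {n : ℕ} (e : Fin (n + 1) → E1) : Prop :=
  ∀ i : Fin n, d (e i.castSucc) = r (e i.succ)

/-- The positive orbit `Orb⁺(v)`: ranges of finite paths with domain `v`. -/
def OrbPlus (d r : E1 → E0) (v : E0) : Set E0 :=
  {v} ∪ {w | ∃ n : ℕ, ∃ e : Fin (n + 1) → E1,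
    IsPath d r e ∧ d (e (Fin.last n)) = v ∧ r (e 0) = w}

/-- An infinite path of edges. -/
def IsInfPath (d r : E1 → E0) (e : ℕ → E1) : Prop := ∀ k : ℕ, d (e k) = r (e (k + 1))

/-- `S` is the negative orbit space `Orb⁻(v, e)` of some negative orbit `e` of `v`:
either `v` itself (when `v` is singular), or a finite path ending at a singular vertex
with range `v`, or an infinite path with range `v`. -/
def IsNegOrbitSet (d r : E1 → E0) (v : E0) (S : Set E0) : Prop :=
  (v ∈ Sg r ∧ S = {v}) ∨
  (∃ n : ℕ, ∃ e : Fin (n + 1) → E1, IsPath d r e ∧ r (e 0) = v ∧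
    d (e (Fin.last n)) ∈ Sg r ∧ S = insert v (Set.range (d ∘ e))) ∨
  (∃ e : ℕ → E1, IsInfPath d r e ∧ r (e 0) = v ∧ S = insert v (Set.range (d ∘ e)))

/-- The orbit space `Orb(v, e) = ⋃_{v' ∈ Orb⁻(v,e)} Orb⁺(v')`, expressed in terms of the
negative orbit space `S = Orb⁻(v, e)`. -/
def Orb (d r : E1 → E0) (S : Set E0) : Set E0 := ⋃ v ∈ S, OrbPlus d r v

/-- A maximal head: a non-empty closed invariant set in which any two points can be
approximated by the positive orbit of a common vertex. -/
def MaximalHead (d r : E1 → E0) (X : Set E0) : Prop :=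
  X.Nonempty ∧ IsClosed X ∧ Invariant d r X ∧
  ∀ v1 ∈ X, ∀ v2 ∈ X, ∀ V1 ∈ 𝓝 v1, ∀ V2 ∈ 𝓝 v2,
    ∃ w ∈ X, (OrbPlus d r w ∩ V1).Nonempty ∧ (OrbPlus d r w ∩ V2).Nonempty

/-- Hereditary set: `d (r⁻¹ (V)) ⊆ V`. -/
def Hereditary (d r : E1 → E0) (V : Set E0) : Prop := d '' (r ⁻¹' V) ⊆ V

/-- Saturated set: every regular vertex all of whose received edges have domain in `V`
belongs to `V`. -/
def Saturated (d r : E1 → E0) (V : Set E0) : Prop :=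
  ∀ v ∈ Rg r, d '' (r ⁻¹' {v}) ⊆ V → v ∈ V

/-- `H(V) = ⋃ₙ dⁿ ((rⁿ)⁻¹ (V))`. -/
def HSet (d r : E1 → E0) (V : Set E0) : Set E0 :=
  V ∪ {w | ∃ n : ℕ, ∃ e : Fin (n + 1) → E1,
    IsPath d r e ∧ r (e 0) ∈ V ∧ d (e (Fin.last n)) = w}

/-- The sequence `V₀ = V`, `V_{k+1} = V_k ∪ {v ∈ E⁰_rg : d (r⁻¹ (v)) ⊆ V_k}`. -/
def SatSeq (d r : E1 → E0) (V : Set E0) : ℕ → Set E0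
  | 0 => V
  | k + 1 => SatSeq d r V k ∪ {v | v ∈ Rg r ∧ d '' (r ⁻¹' {v}) ⊆ SatSeq d r V k}

/-- The saturation `S(V) = ⋃ₖ V_k`. -/
def SatSet (d r : E1 → E0) (V : Set E0) : Set E0 := ⋃ k, SatSeq d r V k

/-- Sources of the subgraph on a closed positively invariant set `X`, viewed in `E⁰`:
`X⁰_sce = X⁰ \ closure_{X⁰} (r (X¹))` where `X¹ = d⁻¹ (X⁰)`. -/
def SceIn (d r : E1 → E0) (X : Set E0) : Set E0 := X \ closure (r '' (d ⁻¹' X))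

/-- Vertices of the subgraph on `X` having a relative neighborhood with compact
`r`-preimage in `X¹ = d⁻¹(X⁰)`. -/
def FinIn (d r : E1 → E0) (X : Set E0) : Set E0 :=
  {v | v ∈ X ∧ ∃ V ∈ 𝓝 v, IsCompact (r ⁻¹' (V ∩ X) ∩ d ⁻¹' X)}

/-- Infinite receivers of the subgraph on `X`. -/
def InfIn (d r : E1 → E0) (X : Set E0) : Set E0 := X \ FinIn d r X

/-- Regular vertices of the subgraph on `X`. -/
def RgIn (d r : E1 → E0) (X : Set E0) : Set E0 := FinIn d r X \ closure (SceIn d r X)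

/-- Singular vertices of the subgraph on `X`. -/
def SgIn (d r : E1 → E0) (X : Set E0) : Set E0 := X \ RgIn d r X

/-!
Orbit closures are closed invariant sets, which gives (i) ⇒ (ii). For open `V`, the complement
of `S(H(V))` is the largest invariant set disjoint from `V`: it is positively invariant because
`S(H(V))` is hereditary, and negatively invariant because `S(H(V))` is saturated. The latter
holds as `H(V)` and every stage of the saturation are open, so that the compact set
`d(r⁻¹(v))` at a regular vertex `v` already lies in a single stage. A vertex outside `S(H(V))`
thus has a negative orbit whose orbit space avoids `V`, giving (ii) ⇒ (iii); and applying (iii)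
to the complement of a closed invariant set `X ≠ E⁰` shows `X = ∅`.
-/

open Relation

-- A path `e` in the sense of `IsPath` runs backwards: from `d (e (Fin.last n))` to `r (e 0)`.
def Adj (d r : E1 → E0) (u w : E0) : Prop := ∃ e : E1, d e = u ∧ r e = w

section Reachability

omit [TopologicalSpace E0] [TopologicalSpace E1]

variable {d r : E1 → E0}

theorem isPath_cons_iff {n : ℕ} (f : E1) (e : Fin (n + 1) → E1) :
    IsPath d r (Fin.cons f e : Fin (n + 2) → E1) ↔ d f = r (e 0) ∧ IsPath d r e := by
  simp [IsPath, Fin.forall_fin_succ]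

theorem transGen_adj_iff {u w : E0} :
    TransGen (Adj d r) u w ↔ ∃ n : ℕ, ∃ e : Fin (n + 1) → E1,
      IsPath d r e ∧ d (e (Fin.last n)) = u ∧ r (e 0) = w := by
  constructor
  · intro h
    induction h with
    | single hadj =>
      obtain ⟨f, hfd, hfr⟩ := hadj
      exact ⟨0, fun _ => f, fun i => i.elim0, hfd, hfr⟩
    | tail _ hadj ih =>
      obtain ⟨n, e, he, hlast, h0⟩ := ih
      obtain ⟨f, hfd, hfr⟩ := hadj
      refine ⟨n + 1, Fin.cons f e, (isPath_cons_iff f e).2 ⟨hfd.trans h0.symm, he⟩, ?_, hfr⟩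
      simpa [← Fin.succ_last] using hlast
  · rintro ⟨n, e, he, rfl, rfl⟩
    induction n with
    | zero => exact .single ⟨e 0, rfl, rfl⟩
    | succ n ih =>
      rw [← Fin.cons_self_tail e, isPath_cons_iff] at he
      have := (ih (Fin.tail e) he.2).tail ⟨e 0, he.1, rfl⟩
      simpa [Fin.tail, Fin.succ_last] using this

theorem mem_orbPlus_iff {v w : E0} : w ∈ OrbPlus d r v ↔ ReflTransGen (Adj d r) v w := by
  rw [reflTransGen_iff_eq_or_transGen, transGen_adj_iff]
  rfl

theorem mem_hSet_iff {V : Set E0} {w : E0} :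
    w ∈ HSet d r V ↔ ∃ u ∈ V, ReflTransGen (Adj d r) w u := by
  simp only [HSet, mem_union, mem_ofPred_eq, reflTransGen_iff_eq_or_transGen, transGen_adj_iff]
  grind

variable {X S : Set E0}

theorem PosInv.mem_of_reflTransGen (hX : PosInv d r X) {u w : E0}
    (h : ReflTransGen (Adj d r) u w) (hu : u ∈ X) : w ∈ X := by
  induction h with
  | refl => exact hu
  | tail _ hadj ih =>
    obtain ⟨e, rfl, rfl⟩ := hadj
    exact hX e ih

theorem PosInv.orb_subset (hX : PosInv d r X) (hS : S ⊆ X) : Orb d r S ⊆ X :=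
  iUnion₂_subset fun _ hv _ hw => hX.mem_of_reflTransGen (mem_orbPlus_iff.1 hw) (hS hv)

theorem mem_orb_iff {w : E0} : w ∈ Orb d r S ↔ ∃ v ∈ S, ReflTransGen (Adj d r) v w := by
  simp only [Orb, mem_iUnion₂, mem_orbPlus_iff, exists_prop]

theorem subset_orb : S ⊆ Orb d r S :=
  fun v hv => mem_orb_iff.2 ⟨v, hv, .refl⟩

theorem posInv_orb : PosInv d r (Orb d r S) := by
  intro e he
  obtain ⟨v, hv, h⟩ := mem_orb_iff.1 he
  exact mem_orb_iff.2 ⟨v, hv, h.tail ⟨e, rfl, rfl⟩⟩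

end Reachability

section NegativeOrbits

variable {d r : E1 → E0} {S : Set E0} {v : E0}

theorem NegInv.orb (hS : NegInv d r S) : NegInv d r (Orb d r S) := by
  rintro w ⟨hw, hreg⟩
  obtain ⟨v, hv, h⟩ := mem_orb_iff.1 hw
  rcases reflTransGen_iff_eq_or_transGen.1 h with rfl | h
  · obtain ⟨e, hre, hde⟩ := hS w ⟨hv, hreg⟩
    exact ⟨e, hre, subset_orb hde⟩
  · obtain ⟨u, hvu, e, rfl, rfl⟩ := TransGen.tail'_iff.1 h
    exact ⟨e, rfl, mem_orb_iff.2 ⟨v, hv, hvu⟩⟩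

theorem IsNegOrbitSet.mem (hS : IsNegOrbitSet d r v S) : v ∈ S := by
  rcases hS with ⟨_, rfl⟩ | ⟨_, _, _, _, _, rfl⟩ | ⟨_, _, _, rfl⟩ <;> simp

theorem IsNegOrbitSet.negInv (hS : IsNegOrbitSet d r v S) : NegInv d r S := by
  rintro w ⟨hw, hreg⟩
  rcases hS with ⟨hsg, rfl⟩ | ⟨n, e, he, rfl, hsg, rfl⟩ | ⟨e, he, rfl, rfl⟩
  · exact absurd (mem_singleton_iff.1 hw ▸ hreg) hsg
  · rcases hw with rfl | ⟨i, rfl⟩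
    · exact ⟨e 0, rfl, .inr ⟨0, rfl⟩⟩
    · rcases Fin.eq_castSucc_or_eq_last i with ⟨j, rfl⟩ | rfl
      · exact ⟨e j.succ, (he j).symm, .inr ⟨j.succ, rfl⟩⟩
      · exact absurd hreg hsg
  · rcases hw with rfl | ⟨k, rfl⟩
    · exact ⟨e 0, rfl, .inr ⟨0, rfl⟩⟩
    · exact ⟨e (k + 1), (he k).symm, .inr ⟨k + 1, rfl⟩⟩

theorem exists_isNegOrbitSet_subset_range (u : ℕ → E0)
    (hu : ∀ k, u k ∈ Rg r → ∃ e, r e = u k ∧ d e = u (k + 1)) :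
    ∃ S, IsNegOrbitSet d r (u 0) S ∧ S ⊆ range u := by
  by_cases hall : ∀ k, u k ∈ Rg r
  · choose e hre hde using fun k => hu k (hall k)
    refine ⟨_, .inr (.inr ⟨e, fun k => (hde k).trans (hre (k + 1)).symm, hre 0, rfl⟩), ?_⟩
    rintro _ (rfl | ⟨k, rfl⟩)
    · exact ⟨0, rfl⟩
    · exact ⟨k + 1, (hde k).symm⟩
  push Not at hall
  classical
  have hsg := Nat.find_spec hall
  rcases hn : Nat.find hall with _ | n
  · rw [hn] at hsg
    exact ⟨{u 0}, .inl ⟨hsg, rfl⟩, singleton_subset_iff.2 ⟨0, rfl⟩⟩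
  have hreg (i : Fin (n + 1)) : u i ∈ Rg r := by
    by_contra h
    have := Nat.find_min' hall h
    omega
  choose e hre hde using fun i : Fin (n + 1) => hu i (hreg i)
  refine ⟨_, .inr (.inl ⟨n, e, fun i => ?_, hre 0, ?_, rfl⟩), ?_⟩
  · simp [hde, hre]
  · simpa [hde, hn, Sg] using hsg
  · rintro _ (rfl | ⟨i, rfl⟩)
    · exact ⟨0, rfl⟩
    · exact ⟨i + 1, (hde i).symm⟩

theorem NegInv.exists_isNegOrbitSet_subset {X : Set E0} (hX : NegInv d r X) (hv : v ∈ X) :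
    ∃ S, IsNegOrbitSet d r v S ∧ S ⊆ X := by
  have hstep (w : E0) :
      ∃ w', (w ∈ X → w' ∈ X) ∧ (w ∈ X → w ∈ Rg r → ∃ e, r e = w ∧ d e = w') := by
    by_cases hw : w ∈ X ∩ Rg r
    · obtain ⟨e, hre, hde⟩ := hX w hw
      exact ⟨d e, fun _ => hde, fun _ _ => ⟨e, hre, rfl⟩⟩
    · exact ⟨w, id, fun hwX hreg => absurd ⟨hwX, hreg⟩ hw⟩
  choose s hsX hs using hstep
  have huX (k : ℕ) : s^[k] v ∈ X := MapsTo.iterate hsX k hv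
  obtain ⟨S, hS, hSu⟩ := exists_isNegOrbitSet_subset_range (fun k => s^[k] v) fun k hk => by
    simpa only [Function.iterate_succ_apply'] using hs _ (huX k) hk
  exact ⟨S, hS, hSu.trans (range_subset_iff.2 huX)⟩

end NegativeOrbits

section Hereditary

omit [TopologicalSpace E0] [TopologicalSpace E1]

variable {d r : E1 → E0} {V W : Set E0}

theorem posInv_compl_iff : PosInv d r Wᶜ ↔ Hereditary d r W := by
  simp only [PosInv, Hereditary, image_subset_iff, mem_compl_iff, not_imp_not]
  rfl

theorem subset_hSet : V ⊆ HSet d r V := subset_union_left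

theorem hereditary_hSet : Hereditary d r (HSet d r V) := by
  rintro _ ⟨e, he, rfl⟩
  obtain ⟨u, hu, h⟩ := mem_hSet_iff.1 he
  exact mem_hSet_iff.2 ⟨u, hu, h.head ⟨e, rfl, rfl⟩⟩

theorem Hereditary.hSet_subset (hW : Hereditary d r W) (hVW : V ⊆ W) : HSet d r V ⊆ W := by
  intro w hw
  obtain ⟨u, hu, h⟩ := mem_hSet_iff.1 hw
  by_contra hwW
  exact (posInv_compl_iff.2 hW).mem_of_reflTransGen h hwW (hVW hu)

end Hereditary

section Saturated

variable {d r : E1 → E0} {V W : Set E0}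

theorem negInv_compl_iff : NegInv d r Wᶜ ↔ Saturated d r W := by
  refine forall_congr' fun v => ⟨fun h hreg hsub => ?_, fun h ⟨hv, hreg⟩ => ?_⟩
  · by_contra hv
    obtain ⟨e, rfl, he⟩ := h ⟨hv, hreg⟩
    exact he (hsub ⟨e, rfl, rfl⟩)
  · by_contra hne
    refine hv (h hreg ?_)
    rintro _ ⟨e, he, rfl⟩
    by_contra hde
    exact hne ⟨e, he, hde⟩

theorem satSeq_mono (V : Set E0) : Monotone (SatSeq d r V) :=
  monotone_nat_of_le_succ fun _ => subset_union_left

theorem subset_satSet : V ⊆ SatSet d r V := subset_iUnion (SatSeq d r V) 0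

theorem Saturated.satSet_subset (hW : Saturated d r W) (hVW : V ⊆ W) : SatSet d r V ⊆ W := by
  refine iUnion_subset fun k => ?_
  induction k with
  | zero => exact hVW
  | succ k ih => exact union_subset ih fun v ⟨hreg, hsub⟩ => hW v hreg (hsub.trans ih)

theorem Hereditary.satSet (hV : Hereditary d r V) : Hereditary d r (SatSet d r V) := by
  suffices ∀ k, Hereditary d r (SatSeq d r V k) by
    rintro _ ⟨e, he, rfl⟩
    obtain ⟨k, hk⟩ := mem_iUnion.1 he
    exact mem_iUnion.2 ⟨k, this k ⟨e, hk, rfl⟩⟩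
  intro k
  induction k with
  | zero => exact hV
  | succ k ih =>
    rintro _ ⟨e, he | ⟨_, hsub⟩, rfl⟩
    · exact .inl (ih ⟨e, he, rfl⟩)
    · exact .inl (hsub ⟨e, rfl, rfl⟩)

end Saturated

section Topology

variable {d r : E1 → E0} {V W X : Set E0}

theorem Hereditary.interior (hd : IsOpenMap d) (hr : Continuous r) (hW : Hereditary d r W) :
    Hereditary d r (interior W) :=
  interior_maximal ((image_mono (preimage_mono interior_subset)).trans hW)
    (hd _ (isOpen_interior.preimage hr))

theorem isOpen_hSet (hd : IsOpenMap d) (hr : Continuous r) (hV : IsOpen V) :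
    IsOpen (HSet d r V) := by
  have hint : HSet d r V ⊆ interior (HSet d r V) :=
    (hereditary_hSet.interior hd hr).hSet_subset (interior_maximal subset_hSet hV)
  exact interior_eq_iff_isOpen.1 (interior_subset.antisymm hint)

theorem isOpen_finSet : IsOpen (FinSet r) := by
  refine isOpen_iff_mem_nhds.2 fun v ⟨U, hU, hK⟩ => ?_
  filter_upwards [interior_mem_nhds.2 hU] with w hw
  exact ⟨U, mem_interior_iff_mem_nhds.1 hw, hK⟩

theorem isOpen_rg : IsOpen (Rg r) :=
  isOpen_finSet.sdiff isClosed_closure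

theorem isOpen_setOf_rg_image_subset [T2Space E0] (hd : Continuous d) (hr : Continuous r)
    (hW : IsOpen W) : IsOpen {v | v ∈ Rg r ∧ d '' (r ⁻¹' {v}) ⊆ W} := by
  refine isOpen_iff_mem_nhds.2 fun v ⟨hreg, hsub⟩ => ?_
  obtain ⟨U, hU, hK⟩ := hreg.1
  set C := r '' (r ⁻¹' U ∩ d ⁻¹' Wᶜ)
  have hC : IsClosed C := ((hK.inter_right (hW.isClosed_compl.preimage hd)).image hr).isClosed
  have hvC : v ∉ C := by
    rintro ⟨e, ⟨_, he⟩, rfl⟩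
    exact he (hsub ⟨e, rfl, rfl⟩)
  filter_upwards [interior_mem_nhds.2 hU, hC.isOpen_compl.mem_nhds hvC,
    isOpen_rg.mem_nhds hreg] with w hwU hwC hwreg
  refine ⟨hwreg, ?_⟩
  rintro _ ⟨e, rfl, rfl⟩
  by_contra he
  exact hwC ⟨e, ⟨interior_subset (s := U) hwU, he⟩, rfl⟩

theorem isOpen_satSeq [T2Space E0] (hd : Continuous d) (hr : Continuous r) (hV : IsOpen V)
    (k : ℕ) : IsOpen (SatSeq d r V k) := by
  induction k with
  | zero => exact hV
  | succ k ih => exact ih.union (isOpen_setOf_rg_image_subset hd hr ih)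

theorem saturated_satSet [T2Space E0] (hd : Continuous d) (hr : Continuous r) (hV : IsOpen V) :
    Saturated d r (SatSet d r V) := by
  intro v hreg hsub
  obtain ⟨U, hU, hK⟩ := hreg.1
  have hcpt : IsCompact (d '' (r ⁻¹' {v})) :=
    (hK.of_isClosed_subset (isClosed_singleton.preimage hr)
      (preimage_mono (singleton_subset_iff.2 (mem_of_mem_nhds hU)))).image hd
  obtain ⟨k, hk⟩ := hcpt.elim_directed_cover _ (isOpen_satSeq hd hr hV) hsub
    (satSeq_mono V).directed_le
  exact mem_iUnion.2 ⟨k + 1, .inr ⟨hreg, hk⟩⟩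

theorem PosInv.closure (hd : IsOpenMap d) (hr : Continuous r) (hX : PosInv d r X) :
    PosInv d r (closure X) := by
  intro e he
  refine mem_closure_iff.2 fun t ht hrt => ?_
  obtain ⟨_, ⟨e', he't, rfl⟩, hde'⟩ :=
    mem_closure_iff.1 he _ (hd _ (ht.preimage hr)) ⟨e, hrt, rfl⟩
  exact ⟨r e', he't, hX e' hde'⟩

theorem NegInv.closure [T2Space E0] (hd : Continuous d) (hr : Continuous r) (hX : NegInv d r X) :
    NegInv d r (closure X) := by
  rintro v ⟨hv, hreg⟩
  by_contra hne
  have hsub : d '' (r ⁻¹' {v}) ⊆ (_root_.closure X)ᶜ := by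
    rintro _ ⟨e, he, rfl⟩ hde
    exact hne ⟨e, he, hde⟩
  obtain ⟨w, ⟨hwreg, hwsub⟩, hwX⟩ := mem_closure_iff.1 hv _
    (isOpen_setOf_rg_image_subset hd hr isClosed_closure.isOpen_compl) ⟨hreg, hsub⟩
  obtain ⟨e, rfl, he⟩ := hX _ ⟨hwX, hwreg⟩
  exact hwsub ⟨e, rfl, rfl⟩ (subset_closure he)

theorem Invariant.closure [T2Space E0] (hd : IsLocalHomeomorph d) (hr : Continuous r)
    (hX : Invariant d r X) : Invariant d r (closure X) :=
  ⟨hX.1.closure hd.isOpenMap hr, hX.2.closure hd.continuous hr⟩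

end Topology

section LargestInvariant

variable {d r : E1 → E0} {V X : Set E0}

theorem invariant_compl_satSet_hSet [T2Space E0] (hd : IsLocalHomeomorph d) (hr : Continuous r)
    (hV : IsOpen V) : Invariant d r (SatSet d r (HSet d r V))ᶜ :=
  ⟨posInv_compl_iff.2 hereditary_hSet.satSet,
    negInv_compl_iff.2 (saturated_satSet hd.continuous hr (isOpen_hSet hd.isOpenMap hr hV))⟩

theorem Invariant.subset_compl_satSet_hSet (hX : Invariant d r X) (hXV : Disjoint X V) :
    X ⊆ (SatSet d r (HSet d r V))ᶜ := by
  have hher : Hereditary d r Xᶜ := by rw [← posInv_compl_iff, compl_compl]; exact hX.1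
  have hsat : Saturated d r Xᶜ := by rw [← negInv_compl_iff, compl_compl]; exact hX.2
  exact subset_compl_comm.1 (hsat.satSet_subset (hher.hSet_subset hXV.subset_compl_left))

end LargestInvariant

theorem stmt18_general [T2Space E0]
    (d r : E1 → E0) (hd : IsLocalHomeomorph d) (hr : Continuous r) :
    List.TFAE
      [∀ X : Set E0, IsClosed X → Invariant d r X → X = ∅ ∨ X = Set.univ,
       ∀ (v : E0) (S : Set E0), IsNegOrbitSet d r v S → Dense (Orb d r S),
       ∀ V : Set E0, IsOpen V → V.Nonempty →
         SatSet d r (HSet d r V) = Set.univ] := by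
  tfae_have 1 → 2 := by
    intro hmin v S hS
    have hinv : Invariant d r (closure (Orb d r S)) :=
      Invariant.closure hd hr ⟨posInv_orb, hS.negInv.orb⟩
    rcases hmin _ isClosed_closure hinv with h | h
    · exact absurd (h ▸ subset_closure (subset_orb hS.mem)) (notMem_empty v)
    · exact dense_iff_closure_eq.2 h
  tfae_have 2 → 3 := by
    intro hdense V hV hVne
    refine eq_univ_of_forall fun v => by_contra fun hv => ?_
    have hinv := invariant_compl_satSet_hSet hd hr hV
    obtain ⟨S, hS, hSX⟩ := hinv.2.exists_isNegOrbitSet_subset hv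
    obtain ⟨w, hwV, hwO⟩ := (hdense v S hS).inter_open_nonempty V hV hVne
    exact hinv.1.orb_subset hSX hwO (subset_satSet (subset_hSet hwV))
  tfae_have 3 → 1 := by
    intro hsat X hX hinv
    refine or_iff_not_imp_right.2 fun hne => ?_
    have := hinv.subset_compl_satSet_hSet (V := Xᶜ) disjoint_compl_right
    rwa [hsat _ hX.isOpen_compl (nonempty_compl.2 hne), compl_univ, subset_empty_iff] at this
  tfae_finish

theorem stmt18 [LocallyCompactSpace E0] [T2Space E0] [LocallyCompactSpace E1] [T2Space E1]
    (d r : E1 → E0) (hd : IsLocalHomeomorph d) (hr : Continuous r) :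
    List.TFAE
      [∀ X : Set E0, IsClosed X → Invariant d r X → X = ∅ ∨ X = Set.univ,
       ∀ (v : E0) (S : Set E0), IsNegOrbitSet d r v S → Dense (Orb d r S),
       ∀ V : Set E0, IsOpen V → V.Nonempty →
         SatSet d r (HSet d r V) = Set.univ] :=
  stmt18_general d r hd hr
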